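/- arXiv:2002.02932 — 3 statements merged into one kernel-verified Lean document; each statement's English description precedes it below -/
import Mathlib

section
/- Let k be a commutative ring, d ≥ 1, and M, N finitely generated projective k-modules. (i) The canonical isomorphism M^{⊗d} ⊗ N^{⊗d} ≅ (M⊗N)^{⊗d} carries the submodule Γ^d M ⊗ Γ^d N into Γ^d(M⊗N), defining a k-linear map ψ^d(M,N): Γ^d M ⊗ Γ^d N → Γ^d(M⊗N). (ii) These maps are natural: for all k-linear maps f: M → M' and g: N → N' between finitely generated projective k-modules, Γ^d(f⊗g) ∘ ψ^d(M,N) = ψ^d(M',N') ∘ (Γ^d f ⊗ Γ^d g). -/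
open scoped TensorProduct
open PiTensorProduct

variable (k : Type*) [CommRing k]

/-- Right action of a permutation `σ ∈ S_d` on the `d`-th tensor power. -/
noncomputable def permAction (M : Type*) [AddCommGroup M] [Module k M] {d : ℕ}
    (σ : Equiv.Perm (Fin d)) : (⨂[k]^d M) →ₗ[k] (⨂[k]^d M) :=
  (PiTensorProduct.reindex k (fun _ : Fin d => M) σ).toLinearMap

/-- The `d`-th divided power `Γ^d M = (M^{⊗d})^{S_d}`, the submodule of symmetric tensors. -/
noncomputable def dividedPower (M : Type*) [AddCommGroup M] [Module k M] (d : ℕ) :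
    Submodule k (⨂[k]^d M) where
  carrier := {x | ∀ σ : Equiv.Perm (Fin d), permAction k M σ x = x}
  add_mem' := fun ha hb σ => by rw [map_add, ha σ, hb σ]
  zero_mem' := fun σ => map_zero _
  smul_mem' := fun c x hx σ => by rw [map_smul, hx σ]

lemma map_mem_dividedPower {M N : Type*} [AddCommGroup M] [Module k M]
    [AddCommGroup N] [Module k N] {d : ℕ} (f : M →ₗ[k] N) {x : ⨂[k]^d M}
    (hx : x ∈ dividedPower k M d) :
    PiTensorProduct.map (fun _ : Fin d => f) x ∈ dividedPower k N d := by
  intro σ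
  have hxσ : (PiTensorProduct.reindex k (fun _ : Fin d => M) σ) x = x := hx σ
  have h := PiTensorProduct.map_reindex (fun _ : Fin d => f) (σ : Fin d ≃ Fin d) x
  show (PiTensorProduct.reindex k (fun _ : Fin d => N) σ)
      ((PiTensorProduct.map fun _ => f) x) = (PiTensorProduct.map fun _ => f) x
  rw [← h, hxσ]

/-- The functorial action `Γ^d f : Γ^d M → Γ^d N` of a linear map. -/
noncomputable def dividedPowerMap {M N : Type*} [AddCommGroup M] [Module k M]
    [AddCommGroup N] [Module k N] (d : ℕ) (f : M →ₗ[k] N) :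
    (dividedPower k M d) →ₗ[k] (dividedPower k N d) :=
  (PiTensorProduct.map (fun _ : Fin d => f)).restrict
    (fun _ hx => map_mem_dividedPower k f hx)

/-- The canonical interchange map `M^{⊗d} ⊗ N^{⊗d} → (M ⊗ N)^{⊗d}`. -/
noncomputable def interchange (M N : Type*) [AddCommGroup M] [Module k M]
    [AddCommGroup N] [Module k N] (d : ℕ) :
    (⨂[k]^d M) ⊗[k] (⨂[k]^d N) →ₗ[k] ⨂[k]^d (M ⊗[k] N) :=
  TensorProduct.lift (PiTensorProduct.map₂ (fun _ : Fin d => TensorProduct.mk k M N))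


lemma interchange_tprod {M N : Type*} [AddCommGroup M] [Module k M]
    [AddCommGroup N] [Module k N] {d : ℕ} (m : Fin d → M) (n : Fin d → N) :
    interchange k M N d (tprod k m ⊗ₜ[k] tprod k n) = tprod k fun i => m i ⊗ₜ[k] n i := by
  simp [interchange, PiTensorProduct.map₂_tprod_tprod]

lemma interchange_comm_perm {M N : Type*} [AddCommGroup M] [Module k M]
    [AddCommGroup N] [Module k N] {d : ℕ} (σ : Equiv.Perm (Fin d)) :
    (permAction k (M ⊗[k] N) σ) ∘ₗ interchange k M N d =
      interchange k M N d ∘ₗ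
        TensorProduct.map (permAction k M σ) (permAction k N σ) := by
  ext m n
  simp [permAction, interchange_tprod, PiTensorProduct.reindex_tprod]

lemma interchange_natural {M N M' N' : Type*} [AddCommGroup M] [Module k M]
    [AddCommGroup N] [Module k N] [AddCommGroup M'] [Module k M']
    [AddCommGroup N'] [Module k N'] {d : ℕ} (f : M →ₗ[k] M') (g : N →ₗ[k] N') :
    (PiTensorProduct.map (fun _ : Fin d => TensorProduct.map f g)) ∘ₗ
        interchange k M N d =
      interchange k M' N' d ∘ₗ
        TensorProduct.map (PiTensorProduct.map (fun _ : Fin d => f))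
          (PiTensorProduct.map (fun _ : Fin d => g)) := by
  ext m n
  simp [interchange_tprod, PiTensorProduct.map_tprod]

lemma interchange_mem_dividedPower {M N : Type*} [AddCommGroup M] [Module k M]
    [AddCommGroup N] [Module k N] {d : ℕ}
    (z : ↥(dividedPower k M d) ⊗[k] ↥(dividedPower k N d)) :
    interchange k M N d
      (TensorProduct.map (dividedPower k M d).subtype
        (dividedPower k N d).subtype z) ∈ dividedPower k (M ⊗[k] N) d := by
  intro σ
  have hsubM : (permAction k M σ) ∘ₗ (dividedPower k M d).subtype =
      (dividedPower k M d).subtype := LinearMap.ext fun x => x.2 σ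
  have hsubN : (permAction k N σ) ∘ₗ (dividedPower k N d).subtype =
      (dividedPower k N d).subtype := LinearMap.ext fun x => x.2 σ
  have h2 : (TensorProduct.map (permAction k M σ) (permAction k N σ)) ∘ₗ
      TensorProduct.map (dividedPower k M d).subtype (dividedPower k N d).subtype =
      TensorProduct.map (dividedPower k M d).subtype (dividedPower k N d).subtype := by
    rw [← TensorProduct.map_comp, hsubM, hsubN]
  have h1 := congrFun (congrArg DFunLike.coe (interchange_comm_perm k (M := M) (N := N) σ))
    (TensorProduct.map (dividedPower k M d).subtype (dividedPower k N d).subtype z)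
  have h3 := congrFun (congrArg DFunLike.coe h2) z
  simp only [LinearMap.comp_apply] at h1 h3
  show permAction k (M ⊗[k] N) σ _ = _
  rw [h1, h3]

/-- (i) the canonical isomorphism `M^{⊗d} ⊗ N^{⊗d} ≅ (M⊗N)^{⊗d}` carries
`Γ^d M ⊗ Γ^d N` into `Γ^d (M⊗N)`, defining `ψ^d(M,N) : Γ^d M ⊗ Γ^d N → Γ^d(M⊗N)`;
(ii) these maps are natural in both variables. -/
theorem psi_carries_dividedPowers_and_natural
    {k : Type*} [CommRing k] {d : ℕ} (hd : 0 < d)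
    (M N M' N' : Type*)
    [AddCommGroup M] [Module k M] [Module.Finite k M] [Module.Projective k M]
    [AddCommGroup N] [Module k N] [Module.Finite k N] [Module.Projective k N]
    [AddCommGroup M'] [Module k M'] [Module.Finite k M'] [Module.Projective k M']
    [AddCommGroup N'] [Module k N'] [Module.Finite k N'] [Module.Projective k N']
    (f : M →ₗ[k] M') (g : N →ₗ[k] N') :
    (Submodule.map (interchange k M N d)
        (LinearMap.range (TensorProduct.map
          (dividedPower k M d).subtype (dividedPower k N d).subtype))
      ≤ dividedPower k (M ⊗[k] N) d) ∧
    (∃ (ψ : (↥(dividedPower k M d) ⊗[k] ↥(dividedPower k N d)) →ₗ[k]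
            ↥(dividedPower k (M ⊗[k] N) d))
       (ψ' : (↥(dividedPower k M' d) ⊗[k] ↥(dividedPower k N' d)) →ₗ[k]
            ↥(dividedPower k (M' ⊗[k] N') d)),
      (∀ (x : ↥(dividedPower k M d)) (y : ↥(dividedPower k N d)),
        (ψ (x ⊗ₜ[k] y) : ⨂[k]^d (M ⊗[k] N)) =
          interchange k M N d ((x : ⨂[k]^d M) ⊗ₜ[k] (y : ⨂[k]^d N))) ∧
      (∀ (x : ↥(dividedPower k M' d)) (y : ↥(dividedPower k N' d)),
        (ψ' (x ⊗ₜ[k] y) : ⨂[k]^d (M' ⊗[k] N')) =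
          interchange k M' N' d ((x : ⨂[k]^d M') ⊗ₜ[k] (y : ⨂[k]^d N'))) ∧
      (dividedPowerMap k d (TensorProduct.map f g)) ∘ₗ ψ =
        ψ' ∘ₗ TensorProduct.map (dividedPowerMap k d f) (dividedPowerMap k d g)) := by
  classical
  set ψ : (↥(dividedPower k M d) ⊗[k] ↥(dividedPower k N d)) →ₗ[k]
      ↥(dividedPower k (M ⊗[k] N) d) :=
    LinearMap.codRestrict (dividedPower k (M ⊗[k] N) d)
      (interchange k M N d ∘ₗ TensorProduct.map (dividedPower k M d).subtype
        (dividedPower k N d).subtype)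
      (fun z => interchange_mem_dividedPower k z) with hψ
  set ψ' : (↥(dividedPower k M' d) ⊗[k] ↥(dividedPower k N' d)) →ₗ[k]
      ↥(dividedPower k (M' ⊗[k] N') d) :=
    LinearMap.codRestrict (dividedPower k (M' ⊗[k] N') d)
      (interchange k M' N' d ∘ₗ TensorProduct.map (dividedPower k M' d).subtype
        (dividedPower k N' d).subtype)
      (fun z => interchange_mem_dividedPower k z) with hψ'
  refine ⟨?_, ψ, ψ', ?_, ?_, ?_⟩
  · rintro x ⟨y, ⟨z, rfl⟩, rfl⟩
    exact interchange_mem_dividedPower k z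
  · intro x y
    simp [hψ, LinearMap.codRestrict, TensorProduct.map_tmul]
  · intro x y
    simp [hψ', LinearMap.codRestrict, TensorProduct.map_tmul]
  · apply TensorProduct.ext'
    intro x y
    apply Subtype.ext
    have h1 : ((dividedPowerMap k d (TensorProduct.map f g) ∘ₗ ψ) (x ⊗ₜ[k] y) :
        ⨂[k]^d (M' ⊗[k] N')) =
        PiTensorProduct.map (fun _ : Fin d => TensorProduct.map f g)
          (interchange k M N d ((x : ⨂[k]^d M) ⊗ₜ[k] (y : ⨂[k]^d N))) := by
      simp [hψ, dividedPowerMap, LinearMap.codRestrict, LinearMap.restrict_apply,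
        TensorProduct.map_tmul]
    have h2 : ((ψ' ∘ₗ TensorProduct.map (dividedPowerMap k d f)
          (dividedPowerMap k d g)) (x ⊗ₜ[k] y) : ⨂[k]^d (M' ⊗[k] N')) =
        interchange k M' N' d
          ((PiTensorProduct.map (fun _ : Fin d => f) (x : ⨂[k]^d M)) ⊗ₜ[k]
            (PiTensorProduct.map (fun _ : Fin d => g) (y : ⨂[k]^d N))) := by
      simp [hψ', dividedPowerMap, LinearMap.codRestrict, LinearMap.restrict_apply,
        TensorProduct.map_tmul]
    rw [h1, h2]
    have := congrFun (congrArg DFunLike.coe (interchange_natural k (d := d) f g))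
      ((x : ⨂[k]^d M) ⊗ₜ[k] (y : ⨂[k]^d N))
    simpa using this
end

section
/- Let k be a commutative ring, d ≥ 1, A a unital associative k-algebra finitely generated projective as a k-module, and let M, N be left A-modules finitely generated projective over k. If φ: M → N is an A-module homomorphism, then Γ^d(φ): Γ^d M → Γ^d N is a homomorphism of Γ^d A-modules; moreover, if φ is injective then Γ^d(φ) is injective, and if φ is surjective then Γ^d(φ) is surjective. -/
open scoped TensorProduct
open PiTensorProduct

variable (k : Type*) [CommRing k]

section AuxLemmas
variable {k : Type*} [CommRing k]
variable {M N : Type*} [AddCommGroup M] [Module k M] [AddCommGroup N] [Module k N]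


/-- naturality of `tmulEquiv` -/
lemma map_tmulEquiv_comm {ι ι₂ : Type*} (φ : M →ₗ[k] N)
    (x : (⨂[k] _ : ι, M) ⊗[k] (⨂[k] _ : ι₂, M)) :
    PiTensorProduct.map (fun _ : ι ⊕ ι₂ => φ) (tmulEquiv k M x) =
      tmulEquiv k N (TensorProduct.map (PiTensorProduct.map (fun _ : ι => φ))
        (PiTensorProduct.map (fun _ : ι₂ => φ)) x) := by
  induction x using TensorProduct.induction_on with
  | zero => simp
  | add a b ha hb => simp only [map_add, ha, hb]
  | tmul a b =>
    induction a using PiTensorProduct.induction_on with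
    | add x y hx hy => simp only [TensorProduct.add_tmul, map_add, hx, hy]
    | smul_tprod r f =>
      induction b using PiTensorProduct.induction_on with
      | add x y hx hy => simp only [TensorProduct.tmul_add, map_add, hx, hy]
      | smul_tprod r' g =>
        simp only [TensorProduct.smul_tmul, TensorProduct.tmul_smul, map_smul,
          LinearEquiv.map_smul, TensorProduct.map_tmul, map_tprod, tmulEquiv_apply]
        have h : (fun i : ι ⊕ ι₂ => φ (Sum.elim f g i))
            = fun i => Sum.elim (fun i => φ (f i)) (fun i => φ (g i)) i := by
          funext i; cases i <;> rfl
        rw [h]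

lemma map_isEmptyEquiv (φ : M →ₗ[k] N) (x : ⨂[k] _ : Fin 0, M) :
    PiTensorProduct.map (fun _ : Fin 0 => φ) x =
      (isEmptyEquiv (Fin 0)).symm (isEmptyEquiv (Fin 0) x) := by
  induction x using PiTensorProduct.induction_on with
  | add x y hx hy => simp only [map_add, hx, hy]
  | smul_tprod r f =>
    simp only [map_smul, map_tprod, isEmptyEquiv_apply_tprod, LinearEquiv.map_smul,
      isEmptyEquiv_symm_apply, one_smul]
    have h : (fun i : Fin 0 => φ (f i)) = (isEmptyElim : Fin 0 → N) := by
      funext i; exact isEmptyElim i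
    rw [h]

lemma map_subsingletonEquiv (φ : M →ₗ[k] N) (x : ⨂[k] _ : Fin 1, M) :
    PiTensorProduct.map (fun _ : Fin 1 => φ) x =
      (subsingletonEquiv (0 : Fin 1)).symm (φ (subsingletonEquiv (0 : Fin 1) x)) := by
  induction x using PiTensorProduct.induction_on with
  | add x y hx hy => simp only [map_add, hx, hy]
  | smul_tprod r f =>
    simp only [map_smul, map_tprod, subsingletonEquiv_apply_tprod, LinearEquiv.map_smul,
      LinearMap.map_smul, subsingletonEquiv_symm_apply]
    have h : (fun i : Fin 1 => φ (f i)) = fun _ : Fin 1 => φ (f 0) := by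
      funext i; rw [Subsingleton.elim i 0]
    rw [h]
    congr 1; congr 1; funext i; fin_cases i; simp


lemma flat_tensorPower (M : Type*) [AddCommGroup M] [Module k M] [Module.Flat k M] (d : ℕ) :
    Module.Flat k (⨂[k]^d M) := by
  induction d with
  | zero => exact Module.Flat.of_linearEquiv (isEmptyEquiv (Fin 0))
  | succ n ih =>
    haveI := ih
    haveI : Module.Flat k (⨂[k]^1 M) :=
      Module.Flat.of_linearEquiv (subsingletonEquiv (0 : Fin 1))
    exact Module.Flat.of_linearEquiv
      (TensorPower.mulEquiv (R := k) (M := M) (n := n) (m := 1)).symm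

lemma map_tensorPower_injective [Module.Flat k M] [Module.Flat k N]
    (φ : M →ₗ[k] N) (hφ : Function.Injective φ) (d : ℕ) :
    Function.Injective (PiTensorProduct.map (fun _ : Fin d => φ)) := by
  induction d with
  | zero =>
    intro x y h
    rw [map_isEmptyEquiv φ x, map_isEmptyEquiv φ y] at h
    exact (isEmptyEquiv (Fin 0)).injective ((isEmptyEquiv (Fin 0)).symm.injective h)
  | succ n ih =>
    haveI := flat_tensorPower (k := k) M 1
    haveI := flat_tensorPower (k := k) N n
    have h1 : Function.Injective (PiTensorProduct.map (fun _ : Fin 1 => φ)) := by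
      intro x y h
      rw [map_subsingletonEquiv φ x, map_subsingletonEquiv φ y] at h
      exact (subsingletonEquiv (0 : Fin 1)).injective
        (hφ ((subsingletonEquiv (0 : Fin 1)).symm.injective h))
    have hsum : Function.Injective (PiTensorProduct.map (fun _ : Fin n ⊕ Fin 1 => φ)) := by
      intro x y h
      have hx := map_tmulEquiv_comm (ι := Fin n) (ι₂ := Fin 1) φ ((tmulEquiv k M).symm x)
      have hy := map_tmulEquiv_comm (ι := Fin n) (ι₂ := Fin 1) φ ((tmulEquiv k M).symm y)
      rw [LinearEquiv.apply_symm_apply] at hx hy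
      rw [hx, hy] at h
      have h2 := (tmulEquiv k N).injective h
      have hmap : Function.Injective (TensorProduct.map
          (PiTensorProduct.map fun _ : Fin n => φ)
          (PiTensorProduct.map fun _ : Fin 1 => φ)) := by
        rw [← LinearMap.lTensor_comp_rTensor, LinearMap.coe_comp]
        exact (Module.Flat.lTensor_preserves_injective_linearMap _ h1).comp
          (Module.Flat.rTensor_preserves_injective_linearMap _ ih)
      exact (tmulEquiv k M).symm.injective (hmap h2)
    intro x y h
    have h' : PiTensorProduct.map (fun _ : Fin n ⊕ Fin 1 => φ)
          ((reindex k (fun _ : Fin n ⊕ Fin 1 => M) finSumFinEquiv).symm x)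
        = PiTensorProduct.map (fun _ : Fin n ⊕ Fin 1 => φ)
          ((reindex k (fun _ : Fin n ⊕ Fin 1 => M) finSumFinEquiv).symm y) := by
      rw [map_reindex_symm, map_reindex_symm, h]
    exact (reindex k (fun _ : Fin n ⊕ Fin 1 => M) finSumFinEquiv).symm.injective (hsum h')

end AuxLemmas


section act
variable (A : Type*) [Ring A] [Algebra k A]
variable (M : Type*) [AddCommGroup M] [Module k M] [Module A M] [IsScalarTower k A M]
  [SMulCommClass k A M]

/-- The action of the algebra `A^{⊗d}` on `M^{⊗d}`, for an `A`-module `M`;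
it restricts to an action of `Γ^d A` on `Γ^d M`. -/
noncomputable def tensorAct (d : ℕ) : (⨂[k]^d A) →ₗ[k] (⨂[k]^d M) →ₗ[k] ⨂[k]^d M :=
  PiTensorProduct.map₂
    (fun _ : Fin d => (Algebra.lsmul k k M : A →ₐ[k] Module.End k M).toLinearMap)

end act

section ActComm
variable {k : Type*} [CommRing k]
variable {A : Type*} [Ring A] [Algebra k A]
variable {M N : Type*}
  [AddCommGroup M] [Module k M] [Module A M] [IsScalarTower k A M] [SMulCommClass k A M]
  [AddCommGroup N] [Module k N] [Module A N] [IsScalarTower k A N] [SMulCommClass k A N]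

lemma tensorAct_map_comm (φ : M →ₗ[k] N) (hφ : ∀ (a : A) (m : M), φ (a • m) = a • φ m)
    (d : ℕ) (a : ⨂[k]^d A) (x : ⨂[k]^d M) :
    PiTensorProduct.map (fun _ : Fin d => φ) (tensorAct k A M d a x)
      = tensorAct k A N d a (PiTensorProduct.map (fun _ : Fin d => φ) x) := by
  induction a using PiTensorProduct.induction_on with
  | add u v hu hv => simp only [map_add, LinearMap.add_apply, hu, hv]
  | smul_tprod r f =>
    induction x using PiTensorProduct.induction_on with
    | add u v hu hv => simp only [map_add, LinearMap.map_add, hu, hv]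
    | smul_tprod r' g =>
      simp only [map_smul, LinearMap.smul_apply, LinearMap.map_smul]
      unfold tensorAct
      rw [map₂_tprod_tprod, map_tprod, map_tprod, map₂_tprod_tprod]
      have h : (fun i => φ (((Algebra.lsmul k k M).toLinearMap (f i)) (g i)))
          = fun i => ((Algebra.lsmul k k N).toLinearMap (f i)) (φ (g i)) := by
        funext i
        exact hφ (f i) (g i)
      rw [h]

end ActComm

/-- if `φ : M → N` is a homomorphism of `A`-modules then
`Γ^d φ : Γ^d M → Γ^d N` is a homomorphism of `Γ^d A`-modules (it intertwines the action
of every element of `Γ^d A ⊆ A^{⊗d}`); moreover `Γ^d φ` is injective (resp. surjective)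
whenever `φ` is. -/
theorem dividedPowerMap_is_moduleHom_and_preserves_inj_surj
    {k : Type*} [CommRing k] {d : ℕ} (hd : 0 < d)
    (A : Type*) [Ring A] [Algebra k A] [Module.Finite k A] [Module.Projective k A]
    (M N : Type*)
    [AddCommGroup M] [Module k M] [Module A M] [IsScalarTower k A M] [SMulCommClass k A M]
    [Module.Finite k M] [Module.Projective k M]
    [AddCommGroup N] [Module k N] [Module A N] [IsScalarTower k A N] [SMulCommClass k A N]
    [Module.Finite k N] [Module.Projective k N]
    (φ : M →ₗ[k] N) (hφ : ∀ (a : A) (m : M), φ (a • m) = a • φ m) :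
    (∀ a ∈ dividedPower k A d, ∀ x ∈ dividedPower k M d,
      PiTensorProduct.map (fun _ : Fin d => φ) (tensorAct k A M d a x) =
        tensorAct k A N d a (PiTensorProduct.map (fun _ : Fin d => φ) x)) ∧
    (Function.Injective φ → Function.Injective (dividedPowerMap k d φ)) ∧
    (Function.Surjective φ → Function.Surjective (dividedPowerMap k d φ)) := by
  refine ⟨fun a _ x _ => tensorAct_map_comm φ hφ d a x, ?_, ?_⟩
  · intro hinj x y h
    haveI : Module.Flat k M := Module.Flat.of_projective
    haveI : Module.Flat k N := Module.Flat.of_projective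
    have h' := congrArg Subtype.val h
    simp only [dividedPowerMap, LinearMap.restrict_coe_apply] at h'
    exact Subtype.ext (map_tensorPower_injective φ hinj d h')
  · intro hsurj y
    obtain ⟨s, hs⟩ := Module.projective_lifting_property φ (LinearMap.id) hsurj
    refine ⟨⟨PiTensorProduct.map (fun _ : Fin d => s) y.1,
      map_mem_dividedPower k s y.2⟩, ?_⟩
    apply Subtype.ext
    simp only [dividedPowerMap, LinearMap.restrict_coe_apply]
    rw [← LinearMap.comp_apply, ← PiTensorProduct.map_comp]
    simp only [hs, PiTensorProduct.map_id, LinearMap.id_apply]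
end

section
/- Let k be a commutative ring, d ≥ 1, A a unital associative k-algebra finitely generated projective over k, and N ⊆ M an inclusion of left A-modules (finitely generated projective over k) such that M = N ⊕ N' for some k-submodule N' ⊆ M. Then the sequence 0 → ⟨N ⊗ M^{⊗(d-1)}⟩^{S_d} → Γ^d M → Γ^d(M/N) → 0 is exact, where ⟨N ⊗ M^{⊗(d-1)}⟩ denotes the S_d-submodule of M^{⊗d} generated by N ⊗ M^{⊗(d-1)}, the middle map is the inclusion, and the last map is Γ^d(π) induced by the projection π: M → M/N; all maps in the sequence are homomorphisms of Γ^d A-modules. -/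
open scoped TensorProduct
open PiTensorProduct

variable (k : Type*) [CommRing k]

/-- The `S_d`-submodule `⟨N ⊗ M^{⊗(d-1)}⟩` of `M^{⊗d}` generated by the pure tensors
whose first factor lies in a submodule `N ⊆ M`. -/
noncomputable def genSdSub (M : Type*) [AddCommGroup M] [Module k M] (d : ℕ) (hd : 0 < d)
    (N : Submodule k M) : Submodule k (⨂[k]^d M) :=
  ⨆ σ : Equiv.Perm (Fin d), Submodule.map (permAction k M σ)
    (Submodule.span k
      {t | ∃ m : Fin d → M, m ⟨0, hd⟩ ∈ N ∧ t = PiTensorProduct.tprod k m})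

section Aux

variable {k : Type*} [CommRing k] {d : ℕ}
variable {A : Type*} [Ring A] [Algebra k A]
variable {M : Type*} [AddCommGroup M] [Module k M] [Module A M] [IsScalarTower k A M]
  [SMulCommClass k A M]

lemma tensorAct_tprod (a : Fin d → A) (m : Fin d → M) :
    tensorAct k A M d (tprod k a) (tprod k m) = tprod k (fun i => a i • m i) := by
  simp [tensorAct, PiTensorProduct.map₂_tprod_tprod]

lemma permAction_tensorAct (σ : Equiv.Perm (Fin d)) (a : ⨂[k]^d A) (x : ⨂[k]^d M) :
    permAction k M σ (tensorAct k A M d a x) =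
      tensorAct k A M d (permAction k A σ a) (permAction k M σ x) := by
  induction a using PiTensorProduct.induction_on with
  | smul_tprod r as =>
    induction x using PiTensorProduct.induction_on with
    | smul_tprod c m =>
      simp only [map_smul, LinearMap.smul_apply, LinearMap.map_smul]
      congr 1
      congr 1
      show permAction k M σ (tensorAct k A M d (tprod k as) (tprod k m)) = _
      simp only [permAction, LinearEquiv.coe_coe, PiTensorProduct.reindex_tprod,
        tensorAct_tprod]
    | add x y hx hy =>
      simp only [map_add, hx, hy]
  | add a b ha hb =>
    simp only [map_add, LinearMap.add_apply, ha, hb]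

lemma map_tensorAct {P : Type*} [AddCommGroup P] [Module k P] [Module A P]
    [IsScalarTower k A P] [SMulCommClass k A P]
    (g : M →ₗ[k] P) (hg : ∀ (a : A) (m : M), g (a • m) = a • g m)
    (a : ⨂[k]^d A) (x : ⨂[k]^d M) :
    PiTensorProduct.map (fun _ : Fin d => g) (tensorAct k A M d a x) =
      tensorAct k A P d a (PiTensorProduct.map (fun _ : Fin d => g) x) := by
  induction a using PiTensorProduct.induction_on with
  | smul_tprod r as =>
    induction x using PiTensorProduct.induction_on with
    | smul_tprod c m =>
      simp only [map_smul, LinearMap.smul_apply, LinearMap.map_smul]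
      congr 1
      congr 1
      rw [tensorAct_tprod, PiTensorProduct.map_tprod, PiTensorProduct.map_tprod,
        tensorAct_tprod]
      congr 1
      funext i
      exact hg (as i) (m i)
    | add x y hx hy =>
      simp only [map_add, hx, hy]
  | add a b ha hb =>
    simp only [map_add, LinearMap.add_apply, ha, hb]

/-- Any pure tensor one of whose entries lies in `N` belongs to `genSdSub`. -/
lemma tprod_mem_genSdSub (hd : 0 < d) (N : Submodule k M) (m : Fin d → M) (j : Fin d)
    (hm : m j ∈ N) : tprod k m ∈ genSdSub k M d hd N := by
  set σ : Equiv.Perm (Fin d) := Equiv.swap ⟨0, hd⟩ j with hσ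
  have hle := le_iSup (fun σ : Equiv.Perm (Fin d) => Submodule.map (permAction k M σ)
    (Submodule.span k
      {t | ∃ m : Fin d → M, m ⟨0, hd⟩ ∈ N ∧ t = PiTensorProduct.tprod k m})) σ
  apply hle
  refine ⟨tprod k (fun i => m (σ i)), ?_, ?_⟩
  · apply Submodule.subset_span
    refine ⟨fun i => m (σ i), ?_, rfl⟩
    simpa [hσ, Equiv.swap_apply_left] using hm
  · show permAction k M σ _ = _
    simp only [permAction, LinearEquiv.coe_coe, PiTensorProduct.reindex_tprod]
    congr 1
    funext i
    rw [Equiv.apply_symm_apply]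

lemma span_tensorAct_stable (hd : 0 < d) (N : Submodule A M) (a : ⨂[k]^d A) {y : ⨂[k]^d M}
    (hy : y ∈ Submodule.span k {t | ∃ m : Fin d → M,
      m ⟨0, hd⟩ ∈ N.restrictScalars k ∧ t = PiTensorProduct.tprod k m}) :
    tensorAct k A M d a y ∈ Submodule.span k {t | ∃ m : Fin d → M,
      m ⟨0, hd⟩ ∈ N.restrictScalars k ∧ t = PiTensorProduct.tprod k m} := by
  induction hy using Submodule.span_induction with
  | mem t ht =>
    obtain ⟨m, hm0, rfl⟩ := ht
    induction a using PiTensorProduct.induction_on with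
    | smul_tprod r as =>
      simp only [map_smul, LinearMap.smul_apply]
      apply Submodule.smul_mem
      rw [tensorAct_tprod]
      apply Submodule.subset_span
      exact ⟨fun i => as i • m i, N.smul_mem _ hm0, rfl⟩
    | add a b ha hb =>
      rw [map_add, LinearMap.add_apply]
      exact Submodule.add_mem _ ha hb
  | zero => simp
  | add u v hu hv hCu hCv =>
    rw [map_add]
    exact Submodule.add_mem _ hCu hCv
  | smul c u hu hCu =>
    rw [map_smul]
    exact Submodule.smul_mem _ _ hCu

lemma genSdSub_tensorAct_stable (hd : 0 < d) (N : Submodule A M) {a : ⨂[k]^d A}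
    (ha : a ∈ dividedPower k A d) {x : ⨂[k]^d M}
    (hx : x ∈ genSdSub k M d hd (N.restrictScalars k)) :
    tensorAct k A M d a x ∈ genSdSub k M d hd (N.restrictScalars k) := by
  refine Submodule.iSup_induction (x := x) _ hx ?_ (by simp) ?_
  · rintro σ x ⟨y, hy, rfl⟩
    have h1 : tensorAct k A M d a (permAction k M σ y) =
        permAction k M σ (tensorAct k A M d a y) := by
      rw [permAction_tensorAct, ha σ]
    rw [h1]
    have hle := le_iSup (fun σ : Equiv.Perm (Fin d) => Submodule.map (permAction k M σ)
      (Submodule.span k {t | ∃ m : Fin d → M,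
        m ⟨0, hd⟩ ∈ N.restrictScalars k ∧ t = PiTensorProduct.tprod k m})) σ
    exact hle ⟨_, span_tensorAct_stable hd N a hy, rfl⟩
  · intro u v hu hv
    rw [map_add]
    exact Submodule.add_mem _ hu hv

set_option maxHeartbeats 1000000 in
lemma map_eq_zero_iff_mem_genSdSub (hd : 0 < d) (N : Submodule A M)
    {Q : Type*} [AddCommGroup Q] [Module k Q]
    (π : M →ₗ[k] Q) (hker : ∀ m : M, π m = 0 ↔ m ∈ N)
    (s : Q →ₗ[k] M) (hs : π ∘ₗ s = LinearMap.id) (x : ⨂[k]^d M) :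
    PiTensorProduct.map (fun _ : Fin d => π) x = 0 ↔
      x ∈ genSdSub k M d hd (N.restrictScalars k) := by
  classical
  constructor
  · intro hx
    set q : M →ₗ[k] M := s ∘ₗ π with hqdef
    have hqN : ∀ m : M, m - q m ∈ N := by
      intro m
      rw [← hker]
      have : π (q m) = π m := by
        show (π ∘ₗ s) (π m) = π m
        rw [hs]; rfl
      simp [this]
    set F : ℕ → ((⨂[k]^d M) →ₗ[k] ⨂[k]^d M) :=
      fun j => PiTensorProduct.map
        (fun i : Fin d => if (i : ℕ) < j then q else LinearMap.id) with hF
    have hFtprod : ∀ (n : ℕ) (m : Fin d → M), F n ((PiTensorProduct.tprod k) m) =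
        (PiTensorProduct.tprod k : MultilinearMap k (fun _ : Fin d => M) _)
          (fun i : Fin d => if (i : ℕ) < n then q (m i) else m i) := by
      intro n m
      simp only [hF, PiTensorProduct.map_tprod]
      congr 1
      funext i
      by_cases h : (i : ℕ) < n <;> simp [h]
    have hstep : ∀ (y : ⨂[k]^d M) (j : ℕ), j < d →
        F j y - F (j + 1) y ∈ genSdSub k M d hd (N.restrictScalars k) := by
      intro y j hj
      induction y using PiTensorProduct.induction_on with
      | smul_tprod r m =>
        rw [map_smul, map_smul, ← smul_sub]
        apply Submodule.smul_mem
        set jf : Fin d := ⟨j, hj⟩ with hjf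
        set f : Fin d → M := fun i => if (i : ℕ) < j then q (m i) else m i with hf
        have hFj : F j ((PiTensorProduct.tprod k) m) = PiTensorProduct.tprod k f := hFtprod j m
        have hFj1 : F (j + 1) ((PiTensorProduct.tprod k) m) =
            PiTensorProduct.tprod k (Function.update f jf (q (m jf))) := by
          rw [hFtprod (j + 1) m]
          congr 1
          funext i
          by_cases hij : i = jf
          · subst hij
            simp [Function.update_self, hjf]
          · have hij' : (i : ℕ) ≠ j := fun hc => hij (Fin.ext hc)
            rw [Function.update_of_ne hij]
            have hlt : ((i : ℕ) < j + 1) ↔ ((i : ℕ) < j) := by omega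
            simp only [hf, hlt]
        have hfj : f jf = m jf := by
          rw [hf, hjf]; simp
        have key : F j ((PiTensorProduct.tprod k) m) - F (j + 1) ((PiTensorProduct.tprod k) m) =
            PiTensorProduct.tprod k (Function.update f jf (m jf - q (m jf))) := by
          rw [hFj, hFj1, MultilinearMap.map_update_sub]
          congr 1
          rw [← hfj, Function.update_eq_self]
        rw [key]
        exact tprod_mem_genSdSub hd (N.restrictScalars k) _ jf
          (by simpa using hqN (m jf))
      | add u v hu hv =>
        have : F j (u + v) - F (j + 1) (u + v) =
            (F j u - F (j + 1) u) + (F j v - F (j + 1) v) := by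
          rw [map_add, map_add]; abel
        rw [this]
        exact Submodule.add_mem _ hu hv
    have hF0 : F 0 x = x := by
      have h0 : F 0 = LinearMap.id := by
        rw [hF]
        simp only [Nat.not_lt_zero, if_false]
        exact PiTensorProduct.map_id
      rw [h0]; rfl
    have hFd : F d x = 0 := by
      have h1 : (fun i : Fin d => if (i : ℕ) < d then q else LinearMap.id) =
          (fun _ : Fin d => q) := funext fun i => by simp [i.isLt]
      have h2 : PiTensorProduct.map (fun _ : Fin d => q) x = 0 := by
        rw [hqdef]
        have h3 := PiTensorProduct.map_comp (g := fun _ : Fin d => s) (f := fun _ : Fin d => π)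
        rw [h3, LinearMap.comp_apply, hx, map_zero]
      simp only [hF]
      rw [h1, h2]
    have hsum : x = ∑ j ∈ Finset.range d, (F j x - F (j + 1) x) := by
      rw [Finset.sum_range_sub' (fun j => F j x) d, hF0, hFd, sub_zero]
    rw [hsum]
    exact Submodule.sum_mem _ fun j hj => hstep x j (Finset.mem_range.mp hj)
  · intro hx
    have hle : genSdSub k M d hd (N.restrictScalars k) ≤
        LinearMap.ker (PiTensorProduct.map (fun _ : Fin d => π)) := by
      refine iSup_le fun σ => ?_
      rw [Submodule.map_le_iff_le_comap, Submodule.span_le]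
      rintro t ⟨m, hm0, rfl⟩
      simp only [SetLike.mem_coe, Submodule.mem_comap, LinearMap.mem_ker]
      show PiTensorProduct.map (fun _ : Fin d => π) (permAction k M σ ((PiTensorProduct.tprod k) m)) = 0
      simp only [permAction, LinearEquiv.coe_coe, PiTensorProduct.reindex_tprod,
        PiTensorProduct.map_tprod]
      apply MultilinearMap.map_coord_zero (i := σ ⟨0, hd⟩)
      show π (m (σ.symm (σ ⟨0, hd⟩))) = 0
      rw [Equiv.symm_apply_apply]
      exact (hker _).mpr hm0
    exact hle hx

end Aux

set_option maxHeartbeats 2000000 in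
/-- for an inclusion of `A`-modules `N ⊆ M` which is `k`-split
(`M = N ⊕ N'` for a `k`-submodule `N'`), the sequence
`0 → ⟨N ⊗ M^{⊗(d-1)}⟩^{S_d} → Γ^d M → Γ^d(M/N) → 0` is exact, and all maps in it are
homomorphisms of `Γ^d A`-modules. -/
theorem dividedPower_quotient_exact_sequence
    {k : Type*} [CommRing k] {d : ℕ} (hd : 0 < d)
    (A : Type*) [Ring A] [Algebra k A] [Module.Finite k A] [Module.Projective k A]
    (M : Type*)
    [AddCommGroup M] [Module k M] [Module A M] [IsScalarTower k A M] [SMulCommClass k A M]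
    [Module.Finite k M] [Module.Projective k M]
    (N : Submodule A M) (N' : Submodule k M)
    (hsplit : IsCompl (N.restrictScalars k) N')
    [Module.Finite k (M ⧸ N)] [Module.Projective k (M ⧸ N)] :
    -- exactness at `Γ^d (M/N)`: surjectivity of `Γ^d π`
    (Function.Surjective
      (dividedPowerMap k d ((N.mkQ).restrictScalars k :
        M →ₗ[k] M ⧸ N))) ∧
    -- exactness at `Γ^d M`: the kernel of `Γ^d π` is `⟨N ⊗ M^{⊗(d-1)}⟩ ∩ Γ^d M`,
    -- and the first map is the (automatically injective) inclusion
    (∀ x : ↥(dividedPower k M d),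
      dividedPowerMap k d ((N.mkQ).restrictScalars k) x = 0 ↔
        (x : ⨂[k]^d M) ∈ genSdSub k M d hd (N.restrictScalars k)) ∧
    -- the two maps are `Γ^d A`-module homomorphisms:
    -- the submodule `⟨N ⊗ M^{⊗(d-1)}⟩^{S_d}` is stable under the `Γ^d A`-action
    (∀ a ∈ dividedPower k A d,
      ∀ x ∈ genSdSub k M d hd (N.restrictScalars k) ⊓ dividedPower k M d,
        tensorAct k A M d a x ∈ genSdSub k M d hd (N.restrictScalars k) ⊓
          dividedPower k M d) ∧
    -- and `Γ^d π` intertwines the `Γ^d A`-actions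
    (∀ a ∈ dividedPower k A d, ∀ x ∈ dividedPower k M d,
      PiTensorProduct.map (fun _ : Fin d => ((N.mkQ).restrictScalars k : M →ₗ[k] M ⧸ N))
          (tensorAct k A M d a x) =
        tensorAct k A (M ⧸ N) d a
          (PiTensorProduct.map
            (fun _ : Fin d => ((N.mkQ).restrictScalars k : M →ₗ[k] M ⧸ N)) x)) := by
  classical
  set π : M →ₗ[k] M ⧸ N := (N.mkQ).restrictScalars k with hπ
  set e1 := Submodule.quotientEquivOfIsCompl (N.restrictScalars k) N' hsplit with he1
  set e2 := Submodule.Quotient.restrictScalarsEquiv k N with he2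
  set s : (M ⧸ N) →ₗ[k] M := N'.subtype ∘ₗ e1.toLinearMap ∘ₗ e2.symm.toLinearMap with hsdef
  have hπmk : ∀ m : M, π m = e2 (Submodule.Quotient.mk (p := N.restrictScalars k) m) := by
    intro m
    rw [he2, Submodule.Quotient.restrictScalarsEquiv_mk]
    rfl
  have hs : π ∘ₗ s = LinearMap.id := by
    ext y
    show π ((e1 (e2.symm y) : N') : M) = y
    rw [hπmk]
    have h1 : (Submodule.Quotient.mk (p := N.restrictScalars k)
        ((e1 (e2.symm y) : N') : M)) = e2.symm y :=
      Submodule.mk_quotientEquivOfIsCompl_apply hsplit _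
    rw [h1, LinearEquiv.apply_symm_apply]
  have hker : ∀ m : M, π m = 0 ↔ m ∈ N := fun m => Submodule.Quotient.mk_eq_zero N
  have hsmul : ∀ (a : A) (m : M), π (a • m) = a • π m := fun a m => map_smul N.mkQ a m
  refine ⟨?_, ?_, ?_, ?_⟩
  · -- surjectivity
    intro y
    refine ⟨dividedPowerMap k d s y, ?_⟩
    apply Subtype.ext
    simp only [dividedPowerMap, LinearMap.restrict_coe_apply]
    rw [← LinearMap.comp_apply, ← PiTensorProduct.map_comp]
    have hc : (fun _ : Fin d => π ∘ₗ s) =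
        (fun _ : Fin d => (LinearMap.id : (M ⧸ N) →ₗ[k] M ⧸ N)) := by rw [hs]
    rw [hc, PiTensorProduct.map_id, LinearMap.id_apply]
  · -- kernel
    intro x
    rw [← map_eq_zero_iff_mem_genSdSub hd N π hker s hs (x : ⨂[k]^d M),
      ← ZeroMemClass.coe_eq_zero]
    simp only [dividedPowerMap, LinearMap.restrict_coe_apply]
  · -- stability of the submodule
    rintro a ha x ⟨hx1, hx2⟩
    refine ⟨genSdSub_tensorAct_stable hd N ha hx1, fun σ => ?_⟩
    rw [permAction_tensorAct, ha σ, hx2 σ]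
  · -- intertwining
    intro a _ x _
    exact map_tensorAct π hsmul a x
end
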